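/- arXiv:2409.13397 — 3 statements merged into one kernel-verified Lean document; each statement's English description precedes it below -/
import Mathlib

section
/- Define B_0 = A^{-1}(e^A - I) and recursively B_k = A^{-1}(k B_{k-1} + (-1/2)^k (e^A - (-1)^k I)) for k ≥ 1, where A is an invertible square matrix. Then B_k = e^A ∫_0^1 e^{-Aτ}(τ - 1/2)^k dτ for all k ≥ 0. -/
/-!
Integrating `(τ - 1/2)^k • exp (-τ A)` by parts over `[0, 1]` shows that the moments
`C k = exp A * ∫₀¹ (τ - 1/2)^k • exp (-τ A)` satisfy
`A * C k = k • C (k - 1) + (-1/2)^k • (exp A - (-1)^k • 1)`,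
which is the recursion defining `B` multiplied on the left by `A`. As `A` is invertible,
`B k = C k` by induction on `k`.
-/

open NormedSpace intervalIntegral

attribute [local instance] Matrix.linftyOpNormedRing Matrix.linftyOpNormedAlgebra

section

variable {𝔸 : Type*} [NormedRing 𝔸] [NormedAlgebra ℝ 𝔸] [CompleteSpace 𝔸]

theorem mul_integral_pow_smul_exp_smul (a : 𝔸) (c s t : ℝ) (k : ℕ) :
    a * ∫ τ in s..t, (τ - c) ^ k • exp (τ • a) =
      (t - c) ^ k • exp (t • a) - (s - c) ^ k • exp (s • a) -
        (k : ℝ) • ∫ τ in s..t, (τ - c) ^ (k - 1) • exp (τ • a) := by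
  have hpow (τ : ℝ) : HasDerivAt (fun τ : ℝ ↦ (τ - c) ^ k) ((k : ℝ) * (τ - c) ^ (k - 1)) τ :=
    (hasDerivAt_pow k (τ - c)).comp_sub_const τ c
  have hexp : Continuous fun τ : ℝ ↦ exp (τ • a) := (differentiable_exp_smul_const ℝ a).continuous
  have hparts := integral_smul_deriv_eq_deriv_smul (a := s) (b := t) (fun τ _ ↦ hpow τ)
    (fun τ _ ↦ hasDerivAt_exp_smul_const' a τ)
    (by apply Continuous.intervalIntegrable; fun_prop)
    (by apply Continuous.intervalIntegrable; fun_prop)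
  have hmul : ∫ τ in s..t, (τ - c) ^ k • (a * exp (τ • a)) =
      a * ∫ τ in s..t, (τ - c) ^ k • exp (τ • a) := by
    simp only [← mul_smul_comm]
    exact (ContinuousLinearMap.mul ℝ 𝔸 a).intervalIntegral_comp_comm
      (by apply Continuous.intervalIntegrable; fun_prop)
  simp only [mul_smul] at hparts
  rwa [hmul, integral_smul] at hparts

theorem exp_mul_exp_neg (a : 𝔸) : exp a * exp (-a) = 1 := by
  have hball (x : 𝔸) : x ∈ Metric.eball (0 : 𝔸) (expSeries ℝ 𝔸).radius := by
    simp [expSeries_radius_eq_top]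
  rw [← exp_add_of_commute_of_mem_ball (Commute.refl a).neg_right (hball a) (hball (-a)),
    add_neg_cancel, exp_zero]

noncomputable def centeredExpMoment (a : 𝔸) (k : ℕ) : 𝔸 :=
  exp a * ∫ τ in (0 : ℝ)..1, (τ - 1 / 2) ^ k • exp (τ • -a)

theorem mul_centeredExpMoment (a : 𝔸) (k : ℕ) :
    a * centeredExpMoment a k = (k : ℝ) • centeredExpMoment a (k - 1) +
      (-1 / 2 : ℝ) ^ k • (exp a - (-1 : ℝ) ^ k • 1) := by
  have hparts := mul_integral_pow_smul_exp_smul (-a) (1 / 2) 0 1 k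
  rw [zero_smul, one_smul, exp_zero, show (1 - 1 / 2 : ℝ) = 1 / 2 by norm_num,
    show (0 - 1 / 2 : ℝ) = -1 / 2 by norm_num] at hparts
  have hsign : (-1 / 2 : ℝ) ^ k * (-1) ^ k = (1 / 2) ^ k := by rw [← mul_pow]; norm_num
  unfold centeredExpMoment
  rw [← mul_assoc, ((Commute.refl a).exp_right).eq, mul_assoc, ← neg_neg (a * _), ← neg_mul,
    hparts]
  simp only [mul_neg, mul_sub, mul_smul_comm, mul_one, exp_mul_exp_neg, smul_sub, smul_smul,
    hsign]
  abel

end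

theorem stmt_1 (n : ℕ) (A : Matrix (Fin n) (Fin n) ℂ) (hA : IsUnit A)
    (B : ℕ → Matrix (Fin n) (Fin n) ℂ)
    (hB0 : B 0 = A⁻¹ * (exp A - 1))
    (hBk : ∀ k : ℕ, 1 ≤ k →
      B k = A⁻¹ * ((k : ℂ) • B (k - 1) +
        ((-1/2 : ℂ)) ^ k • (exp A - ((-1 : ℂ)) ^ k • (1 : Matrix (Fin n) (Fin n) ℂ)))) :
    ∀ k : ℕ, B k = exp A * ∫ τ in (0:ℝ)..1, (τ - 1/2) ^ k • exp ((-(τ:ℂ)) • A) := by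
  -- The `rfl`s below bridge the product topology on matrices and the one of the operator norm.
  have hmoment (k : ℕ) : exp A * ∫ τ in (0:ℝ)..1, (τ - 1/2) ^ k • exp ((-(τ:ℂ)) • A) =
      centeredExpMoment A k := by
    simp only [centeredExpMoment, neg_smul, Complex.coe_smul, smul_neg]
    rfl
  have hcancel (M : Matrix (Fin n) (Fin n) ℂ) : A⁻¹ * (A * M) = M :=
    Matrix.nonsing_inv_mul_cancel_left _ _ ((Matrix.isUnit_iff_isUnit_det A).mp hA)
  intro k
  rw [hmoment]
  induction k with
  | zero =>
    rw [hB0, ← hcancel (centeredExpMoment A 0), mul_centeredExpMoment]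
    simp
    rfl
  | succ m ih =>
    rw [hBk (m + 1) (by omega), Nat.add_sub_cancel, ih, ← hcancel (centeredExpMoment A (m + 1)),
      mul_centeredExpMoment, Nat.add_sub_cancel]
    simp only [← Complex.coe_smul]
    push_cast
    rfl
end

section
/- For k ≥ 1 and any square matrix A, the matrix B_k = e^A ∫_0^1 e^{-Aτ}(τ - 1/2)^k dτ satisfies A·B_k = k B_{k-1} + (-1/2)^k (e^A - (-1)^k I). -/
/-!
Integration by parts: `d/dτ (p τ • exp (-τ a)) = p' τ • exp (-τ a) - p τ • exp (-τ a) * a`, so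
integrating over `[0, 1]` expresses `(∫ p • exp (-τ a)) * a` through `∫ p' • exp (-τ a)` and the
boundary values `p 0`, `p 1 • exp (-a)`. Multiplying on the left by `exp a`, which commutes with
`a` and with the integral, gives the recursion; for `p τ = (τ - 1/2) ^ k` the boundary values are
`(∓1/2) ^ k`.
-/

open NormedSpace

attribute [local instance] Matrix.linftyOpNormedRing Matrix.linftyOpNormedAlgebra

open MeasureTheory Set

namespace intervalIntegral

variable {A : Type*} [NonUnitalNormedRing A] [NormedSpace ℝ A] [IsScalarTower ℝ A A]
  [SMulCommClass ℝ A A] {f : ℝ → A} {s t : ℝ}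

theorem integral_const_mul_of_integrable (hf : IntervalIntegrable f volume s t) (c : A) :
    ∫ τ in s..t, c * f τ = c * ∫ τ in s..t, f τ := by
  simp only [intervalIntegral, _root_.integral_const_mul_of_integrable hf.1,
    _root_.integral_const_mul_of_integrable hf.2, mul_sub]

theorem integral_mul_const_of_integrable (hf : IntervalIntegrable f volume s t) (c : A) :
    ∫ τ in s..t, f τ * c = (∫ τ in s..t, f τ) * c := by
  simp only [intervalIntegral, _root_.integral_mul_const_of_integrable hf.1,
    _root_.integral_mul_const_of_integrable hf.2, sub_mul]

end intervalIntegral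

theorem Commute.intervalIntegral_right {A : Type*} [NormedRing A] [NormedSpace ℝ A]
    [IsScalarTower ℝ A A] [SMulCommClass ℝ A A] {a : A} {f : ℝ → A} {s t : ℝ}
    (h : ∀ τ, Commute a (f τ)) : Commute a (∫ τ in s..t, f τ) := by
  by_cases hf : IntervalIntegrable f volume s t
  swap
  · rw [intervalIntegral.integral_undef hf]
    exact .zero_right a
  rw [Commute, SemiconjBy, ← intervalIntegral.integral_const_mul_of_integrable hf,
    ← intervalIntegral.integral_mul_const_of_integrable hf]
  exact intervalIntegral.integral_congr fun τ _ => h τ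

section

variable {𝔸 : Type*} [NormedRing 𝔸] [NormedAlgebra ℝ 𝔸] [CompleteSpace 𝔸]

theorem hasDerivAt_exp_neg_smul (a : 𝔸) (τ : ℝ) :
    HasDerivAt (fun t : ℝ => exp ((-t) • a)) (exp ((-τ) • a) * -a) τ := by
  simpa only [smul_neg, neg_smul] using hasDerivAt_exp_smul_const (-a) τ

theorem continuous_exp_neg_smul (a : 𝔸) : Continuous fun t : ℝ => exp ((-t) • a) :=
  continuous_iff_continuousAt.2 fun τ => (hasDerivAt_exp_neg_smul a τ).continuousAt

theorem intervalIntegral_smul_exp_neg_smul_mul {p p' : ℝ → ℝ} {s t : ℝ} (a : 𝔸)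
    (hp : ∀ τ ∈ uIcc s t, HasDerivAt p (p' τ) τ) (hp' : ContinuousOn p' (uIcc s t)) :
    (∫ τ in s..t, p τ • exp ((-τ) • a)) * a =
      (∫ τ in s..t, p' τ • exp ((-τ) • a)) + p s • exp ((-s) • a) - p t • exp ((-t) • a) := by
  have hpc : ContinuousOn p (uIcc s t) := fun τ hτ => (hp τ hτ).continuousAt.continuousWithinAt
  have hint : IntervalIntegrable (fun τ => p τ • exp ((-τ) • a)) volume s t :=
    (hpc.smul (continuous_exp_neg_smul a).continuousOn).intervalIntegrable
  have hint' : IntervalIntegrable (fun τ => p' τ • exp ((-τ) • a)) volume s t :=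
    (hp'.smul (continuous_exp_neg_smul a).continuousOn).intervalIntegrable
  have hftc := intervalIntegral.integral_eq_sub_of_hasDerivAt
    (fun τ hτ => ((hp τ hτ).smul (hasDerivAt_exp_neg_smul a τ)).congr_deriv
      (by rw [smul_mul_assoc])) ((hint.mul_const (-a)).add hint')
  rw [intervalIntegral.integral_add (hint.mul_const (-a)) hint',
    intervalIntegral.integral_mul_const_of_integrable hint, mul_neg, Pi.smul_apply',
    Pi.smul_apply'] at hftc
  linear_combination (norm := module) -hftc

theorem mul_exp_mul_intervalIntegral_smul_exp_neg_smul {p p' : ℝ → ℝ} (a : 𝔸)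
    (hp : ∀ τ ∈ uIcc 0 1, HasDerivAt p (p' τ) τ) (hp' : ContinuousOn p' (uIcc 0 1)) :
    a * (exp a * ∫ τ in (0:ℝ)..1, p τ • exp ((-τ) • a)) =
      exp a * (∫ τ in (0:ℝ)..1, p' τ • exp ((-τ) • a)) + p 0 • exp a - p 1 • 1 := by
  have hcomm : Commute a (∫ τ in (0:ℝ)..1, p τ • exp ((-τ) • a)) :=
    .intervalIntegral_right fun τ => ((Commute.refl a).smul_right _).exp_right.smul_right _
  have hinv : exp a * exp (-a) = 1 := by
    rw [← exp_add_of_commute_of_mem_ball (𝕂 := ℝ) (Commute.refl a).neg_right, add_neg_cancel,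
      exp_zero] <;> simp [expSeries_radius_eq_top]
  calc a * (exp a * ∫ τ in (0:ℝ)..1, p τ • exp ((-τ) • a))
      = exp a * ((∫ τ in (0:ℝ)..1, p τ • exp ((-τ) • a)) * a) := by
        rw [← mul_assoc, ((Commute.refl a).exp_right).eq, mul_assoc, hcomm.eq]
    _ = _ := by
        rw [intervalIntegral_smul_exp_neg_smul_mul a hp hp']
        simp [mul_add, mul_sub, hinv]

theorem mul_exp_mul_intervalIntegral_sub_half_pow_smul (a : 𝔸) (k : ℕ) :
    a * (exp a * ∫ τ in (0:ℝ)..1, (τ - 1/2) ^ k • exp ((-τ) • a)) =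
      (k : ℝ) • (exp a * ∫ τ in (0:ℝ)..1, (τ - 1/2) ^ (k - 1) • exp ((-τ) • a)) +
        (-1/2 : ℝ) ^ k • exp a - (1/2 : ℝ) ^ k • 1 := by
  have hp (τ : ℝ) : HasDerivAt (fun t : ℝ => (t - 1/2) ^ k) (k * (τ - 1/2) ^ (k - 1)) τ :=
    (((hasDerivAt_id' τ).sub_const (1/2)).fun_pow k).congr_deriv (mul_one _)
  rw [mul_exp_mul_intervalIntegral_smul_exp_neg_smul a (fun τ _ => hp τ) (by fun_prop)]
  simp_rw [mul_smul, intervalIntegral.integral_smul, mul_smul_comm]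
  norm_num

end

theorem stmt_3_general (n : ℕ) (A : Matrix (Fin n) (Fin n) ℂ) (k : ℕ) :
    A * (exp A * ∫ τ in (0:ℝ)..1, (τ - 1/2) ^ k • exp ((-(τ:ℂ)) • A)) =
      (k : ℂ) • (exp A * ∫ τ in (0:ℝ)..1, (τ - 1/2) ^ (k - 1) • exp ((-(τ:ℂ)) • A)) +
      ((-1/2 : ℂ)) ^ k • (exp A - ((-1 : ℂ)) ^ k • (1 : Matrix (Fin n) (Fin n) ℂ)) := by
  have hreal (τ : ℝ) : (-(τ:ℂ)) • A = (-τ) • A := by rw [← Complex.ofReal_neg, Complex.coe_smul]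
  have hk : (k : ℂ) = ((k : ℝ) : ℂ) := by norm_cast
  have hneg : (-1/2 : ℂ) = ((-1/2 : ℝ) : ℂ) := by push_cast; ring
  have hpos : (-1/2 * -1 : ℂ) = ((1/2 : ℝ) : ℂ) := by push_cast; ring
  simp only [hreal]
  rw [smul_sub, smul_smul, ← mul_pow, hk, hpos, hneg, ← Complex.ofReal_pow, ← Complex.ofReal_pow,
    Complex.coe_smul, Complex.coe_smul, Complex.coe_smul, ← add_sub_assoc]
  -- `exact` rather than `rw`: the real action on matrices here is `Matrix.smul`, while the
  -- general lemma uses the one of `Matrix.linftyOpNormedAlgebra`; they agree only up to defeq.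
  exact mul_exp_mul_intervalIntegral_sub_half_pow_smul A k

theorem stmt_3 (n : ℕ) (A : Matrix (Fin n) (Fin n) ℂ) (k : ℕ) (hk : 1 ≤ k) :
    A * (exp A * ∫ τ in (0:ℝ)..1, (τ - 1/2) ^ k • exp ((-(τ:ℂ)) • A)) =
      (k : ℂ) • (exp A * ∫ τ in (0:ℝ)..1, (τ - 1/2) ^ (k - 1) • exp ((-(τ:ℂ)) • A)) +
      ((-1/2 : ℂ)) ^ k • (exp A - ((-1 : ℂ)) ^ k • (1 : Matrix (Fin n) (Fin n) ℂ)) :=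
  stmt_3_general n A k
end

section
/- For the (M-1,M) Padé approximant of the exponential with P(x) = ∑_{i=0}^{M-1} [(2M-1-i)!/(i!(M-1-i)!)] x^i and Q(x) = (M!/(M-1)!) ∑_{i=0}^{M} [(2M-1-i)!/(i!(M-i)!)] (-x)^i, the difference e^x Q(x) - P(x) is O(x^{2M}) as x → 0, i.e., the first 2M Taylor coefficients of e^x Q(x) - P(x) vanish. -/
/-!
Leibniz's rule turns the `k`-th derivative at `0` of `exp · q - p`, for polynomials `p` and `q`,
into `∑ⱼ C(k,j) j! qⱼ - k! pₖ`. For the Padé polynomials and every `k < 2M` one has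
`j! qⱼ = (-1)ʲ M! C(2M-1-j, M-1)` and `k! pₖ = M! C(2M-1-k, M)`, so the claim becomes the
binomial identity `∑ⱼ (-1)ʲ C(k,j) C(N-j, m) = [Xᵐ] Xᵏ (X+1)ᴺ⁻ᵏ`, which follows by expanding
`Xᵏ = ((X+1) - 1)ᵏ`.
-/

open Finset Polynomial
open scoped Nat

section IteratedDeriv

variable {𝕜 : Type*} [NontriviallyNormedField 𝕜]

theorem Polynomial.iteratedDeriv_eval (p : 𝕜[X]) (k : ℕ) :
    iteratedDeriv k (fun x => p.eval x) = fun x => (derivative^[k] p).eval x := by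
  rw [iteratedDeriv_eq_iterate]
  induction k generalizing p with
  | zero => rfl
  | succ k ih =>
    have hderiv : _root_.deriv (fun x => p.eval x) = fun x => p.derivative.eval x := by
      ext
      exact p.deriv
    rw [Function.iterate_succ_apply, Function.iterate_succ_apply, hderiv, ih]

theorem Polynomial.iteratedDeriv_eval_zero (p : 𝕜[X]) (k : ℕ) :
    iteratedDeriv k (fun x => p.eval x) 0 = k ! * p.coeff k := by
  rw [iteratedDeriv_eval]
  beta_reduce
  rw [← coeff_zero_eq_eval_zero, coeff_iterate_derivative, zero_add, Nat.descFactorial_self,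
    nsmul_eq_mul]

end IteratedDeriv

theorem iteratedDeriv_cexp_mul_eval_zero (q : ℂ[X]) (k : ℕ) :
    iteratedDeriv k (fun x => Complex.exp x * q.eval x) 0 =
      ∑ j ∈ range (k + 1), k.choose j * (j ! * q.coeff j) := by
  simp_rw [mul_comm (Complex.exp _)]
  rw [iteratedDeriv_fun_mul q.differentiable.contDiff.contDiffAt Complex.contDiff_exp.contDiffAt]
  refine sum_congr rfl fun j _ => ?_
  rw [q.iteratedDeriv_eval_zero, iteratedDeriv_eq_iterate, Complex.iter_deriv_exp,
    Complex.exp_zero, mul_one]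

theorem iteratedDeriv_cexp_mul_eval_sub_eval_zero (p q : ℂ[X]) (k : ℕ) :
    iteratedDeriv k (fun x => Complex.exp x * q.eval x - p.eval x) 0 =
      ∑ j ∈ range (k + 1), k.choose j * (j ! * q.coeff j) - k ! * p.coeff k := by
  rw [iteratedDeriv_fun_sub (Complex.contDiff_exp.mul q.differentiable.contDiff).contDiffAt
    p.differentiable.contDiff.contDiffAt, iteratedDeriv_cexp_mul_eval_zero,
    p.iteratedDeriv_eval_zero]

theorem Polynomial.coeff_sum_range_C_mul_X_pow {R : Type*} [Semiring R] (a : ℕ → R) (n k : ℕ) :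
    (∑ i ∈ range n, C (a i) * X ^ i).coeff k = if k < n then a k else 0 := by
  simp [finsetSum_coeff]

theorem sum_range_neg_one_pow_mul_choose_mul_choose {R : Type*} [CommRing R] {k N : ℕ}
    (hkN : k ≤ N) (m : ℕ) :
    ∑ j ∈ range (k + 1), (-1 : R) ^ j * k.choose j * (N - j).choose m =
      if k ≤ m then ((N - k).choose (m - k) : R) else 0 := by
  have hpoly : ∑ j ∈ range (k + 1), C ((-1 : R) ^ j * k.choose j) * (X + 1) ^ (N - j) =
      (X + 1) ^ (N - k) * X ^ k := by
    calc _ = (X + 1) ^ (N - k) * (-1 + (X + 1)) ^ k := by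
          rw [add_pow (-1 : R[X]), mul_sum]
          refine sum_congr rfl fun j hj => ?_
          rw [mem_range] at hj
          rw [show N - j = N - k + (k - j) by omega, pow_add]
          simp only [map_mul, map_pow, map_neg, map_one, map_natCast]
          ring
      _ = _ := by ring
  simpa only [finsetSum_coeff, coeff_C_mul, coeff_X_add_one_pow, coeff_mul_X_pow', Nat.cast_ite,
    Nat.cast_zero] using congrArg (coeff · m) hpoly

theorem sum_range_neg_one_pow_mul_choose_mul_choose_two_mul_sub_one {R : Type*} [CommRing R]
    {M k : ℕ} (hk : k < 2 * M) :
    ∑ j ∈ range (k + 1), (-1 : R) ^ j * k.choose j * (2 * M - 1 - j).choose (M - 1) =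
      (2 * M - 1 - k).choose M := by
  rw [sum_range_neg_one_pow_mul_choose_mul_choose (by omega)]
  split_ifs with hkM
  · rw [Nat.choose_symm_of_eq_add (by omega : 2 * M - 1 - k = (M - 1 - k) + M)]
  · rw [Nat.choose_eq_zero_of_lt (by omega : 2 * M - 1 - k < M), Nat.cast_zero]

noncomputable def padeNumerator (M : ℕ) : ℂ[X] :=
  ∑ i ∈ range M, C (((2 * M - 1 - i)! : ℂ) / (i ! * (M - 1 - i)!)) * X ^ i

noncomputable def padeDenominator (M : ℕ) : ℂ[X] :=
  ∑ i ∈ range (M + 1),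
    C ((M ! : ℂ) / (M - 1)! * ((2 * M - 1 - i)! / (i ! * (M - i)!)) * (-1) ^ i) * X ^ i

theorem eval_padeNumerator (M : ℕ) (x : ℂ) :
    (padeNumerator M).eval x =
      ∑ i ∈ range M, ((2 * M - 1 - i)! : ℂ) / (i ! * (M - 1 - i)!) * x ^ i := by
  simp [padeNumerator, eval_finsetSum]

theorem eval_padeDenominator (M : ℕ) (x : ℂ) :
    (padeDenominator M).eval x = (M ! : ℂ) / (M - 1)! *
      ∑ i ∈ range (M + 1), ((2 * M - 1 - i)! : ℂ) / (i ! * (M - i)!) * (-x) ^ i := by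
  simp only [padeDenominator, eval_finsetSum, eval_mul, eval_C, eval_pow, eval_X, mul_sum]
  exact sum_congr rfl fun i _ => by rw [neg_pow]; ring

theorem factorial_mul_coeff_padeNumerator {M k : ℕ} (hk : k < 2 * M) :
    (k ! : ℂ) * (padeNumerator M).coeff k = M ! * (2 * M - 1 - k).choose M := by
  rw [padeNumerator, coeff_sum_range_C_mul_X_pow]
  split_ifs with hkM
  · rw [Nat.cast_choose ℂ (by omega : M ≤ 2 * M - 1 - k),
      show 2 * M - 1 - k - M = M - 1 - k by omega]
    field_simp [Nat.cast_ne_zero.2 (Nat.factorial_ne_zero _)]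
  · rw [Nat.choose_eq_zero_of_lt (by omega : 2 * M - 1 - k < M)]
    simp

theorem factorial_mul_coeff_padeDenominator {M k : ℕ} (hk : k < 2 * M) :
    (k ! : ℂ) * (padeDenominator M).coeff k =
      (-1) ^ k * M ! * (2 * M - 1 - k).choose (M - 1) := by
  rw [padeDenominator, coeff_sum_range_C_mul_X_pow]
  split_ifs with hkM
  · have hM : (M ! : ℂ) = M * (M - 1)! := by
      rw [← Nat.cast_mul, Nat.mul_factorial_pred (by omega)]
    rw [Nat.cast_choose ℂ (by omega : M - 1 ≤ 2 * M - 1 - k),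
      show 2 * M - 1 - k - (M - 1) = M - k by omega, hM]
    field_simp [Nat.cast_ne_zero.2 (Nat.factorial_ne_zero _)]
  · rw [Nat.choose_eq_zero_of_lt (by omega : 2 * M - 1 - k < M - 1)]
    simp

theorem stmt_9_general (M : ℕ)
    (P Q : ℂ → ℂ)
    (hP : ∀ x, P x = ∑ i ∈ Finset.range M,
      (((2 * M - 1 - i).factorial : ℂ) / ((i.factorial : ℂ) * ((M - 1 - i).factorial : ℂ))) * x ^ i)
    (hQ : ∀ x, Q x = ((M.factorial : ℂ) / ((M - 1).factorial : ℂ)) *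
      ∑ i ∈ Finset.range (M + 1),
        (((2 * M - 1 - i).factorial : ℂ) / ((i.factorial : ℂ) * ((M - i).factorial : ℂ))) * (-x) ^ i) :
    ∀ k : ℕ, k < 2 * M →
      iteratedDeriv k (fun x : ℂ => Complex.exp x * Q x - P x) 0 = 0 := by
  intro k hk
  obtain rfl : P = fun x => (padeNumerator M).eval x := funext fun x => by
    rw [hP, eval_padeNumerator]
  obtain rfl : Q = fun x => (padeDenominator M).eval x := funext fun x => by
    rw [hQ, eval_padeDenominator]
  have hcoeffQ : ∀ j ∈ range (k + 1), (k.choose j : ℂ) * (j ! * (padeDenominator M).coeff j) =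
      M ! * ((-1) ^ j * k.choose j * (2 * M - 1 - j).choose (M - 1)) := fun j hj => by
    rw [factorial_mul_coeff_padeDenominator (by simp at hj; omega)]
    ring
  rw [iteratedDeriv_cexp_mul_eval_sub_eval_zero, sum_congr rfl hcoeffQ, ← mul_sum,
    sum_range_neg_one_pow_mul_choose_mul_choose_two_mul_sub_one hk,
    factorial_mul_coeff_padeNumerator hk, sub_self]

theorem stmt_9 (M : ℕ) (hM : 1 ≤ M)
    (P Q : ℂ → ℂ)
    (hP : ∀ x, P x = ∑ i ∈ Finset.range M,
      (((2 * M - 1 - i).factorial : ℂ) / ((i.factorial : ℂ) * ((M - 1 - i).factorial : ℂ))) * x ^ i)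
    (hQ : ∀ x, Q x = ((M.factorial : ℂ) / ((M - 1).factorial : ℂ)) *
      ∑ i ∈ Finset.range (M + 1),
        (((2 * M - 1 - i).factorial : ℂ) / ((i.factorial : ℂ) * ((M - i).factorial : ℂ))) * (-x) ^ i) :
    ∀ k : ℕ, k < 2 * M →
      iteratedDeriv k (fun x : ℂ => Complex.exp x * Q x - P x) 0 = 0 :=
  stmt_9_general M P Q hP hQ
end
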